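/- Federer–Fleming-type theorem: ι_n = γ_n, where ι_n is the minimum over n pairwise disjoint nonempty subsets {Q_i} of (1/n)∑_i ∂(Q_i)/π(Q_i), and γ_n is the minimum over families {f_i}_{i=1}^n of nonzero nonnegative functions on V that are pairwise orthogonal with respect to π and normalized by ∑_u f_i(u)π(u) = 1, of (1/n)∑_i ∑_{u,v} (f_i(u)−f_i(v))⁺ φ(u,v). -/

import Mathlib

/-!
Normalized indicators `1_Q / π(Q)` of disjoint sets are orthogonal and nonnegative, and the
gradient norm `∑_{u,v} (f(u) - f(v))⁺ φ(u,v)` of `1_Q / π(Q)` is `∂(Q)/π(Q)`; so `γ_n ≤ ι_n`.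
Conversely, a discrete coarea argument: cutting a nonnegative `f` at its least positive value `t`
writes `f = t·1_{f>0} + (f-t)⁺`, and both the gradient norm and the mass `∑ f π` are additive
along this cut, because the two pieces are monotone functions of `f`. Induction on the support
yields a nonempty `Q ⊆ {f > 0}` whose ratio `∂(Q)/π(Q)` is at most gradient norm over mass, and
the sets obtained from an orthogonal nonnegative family are disjoint. Hence `ι_n ≤ γ_n`.
-/

open Finset

/-- Outgoing boundary flow `∂(Q) = ∑_{u∈Q, v∉Q} K(u,v)π(u)`. -/
noncomputable def dpart {V : Type*} [Fintype V] [DecidableEq V]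
    (K : V → V → ℝ) (π : V → ℝ) (Q : Finset V) : ℝ :=
  ∑ u ∈ Q, ∑ v ∈ Qᶜ, K u v * π u

/-- `π(Q) = ∑_{u∈Q} π(u)`. -/
noncomputable def pim {V : Type*} (π : V → ℝ) (Q : Finset V) : ℝ :=
  ∑ u ∈ Q, π u

/-- The `n`-th isoperimetric constant: minimum of the mean normalized boundary over
families of `n` pairwise disjoint nonempty subsets of `V`. -/
noncomputable def iotaD {V : Type*} [Fintype V] [DecidableEq V]
    (K : V → V → ℝ) (π : V → ℝ) (n : ℕ) : ℝ :=
  sInf {x : ℝ | ∃ Q : Fin n → Finset V, (∀ i, (Q i).Nonempty) ∧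
    Pairwise (Function.onFun Disjoint Q) ∧
    x = (∑ i, dpart K π (Q i) / pim π (Q i)) / n}

/-- The `n`-th partition isoperimetric constant: minimum of the mean normalized boundary
over partitions of `V` into `n` nonempty parts. -/
noncomputable def iotaP {V : Type*} [Fintype V] [DecidableEq V]
    (K : V → V → ℝ) (π : V → ℝ) (n : ℕ) : ℝ :=
  sInf {x : ℝ | ∃ Q : Fin n → Finset V, (∀ i, (Q i).Nonempty) ∧
    Pairwise (Function.onFun Disjoint Q) ∧
    Finset.univ.biUnion Q = Finset.univ ∧
    x = (∑ i, dpart K π (Q i) / pim π (Q i)) / n}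

/-- The functional (Federer–Fleming) constant `γ_n`: minimum of the mean `L¹` gradient norm
over positive orthonormal families of `n` functions. -/
noncomputable def gammaN {V : Type*} [Fintype V]
    (K : V → V → ℝ) (π : V → ℝ) (n : ℕ) : ℝ :=
  sInf {x : ℝ | ∃ f : Fin n → V → ℝ,
    (∀ i, f i ≠ 0) ∧ (∀ i u, 0 ≤ f i u) ∧
    (∀ i, ∑ u, f i u * π u = 1) ∧
    (Pairwise fun i j => ∑ u, f i u * f j u * π u = 0) ∧
    x = (∑ i, ∑ u, ∑ v, max (f i u - f i v) 0 * (K u v * π u)) / n}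


section Coarea

variable {V : Type*} [Fintype V]

noncomputable def gradNorm (K : V → V → ℝ) (π : V → ℝ) (f : V → ℝ) : ℝ :=
  ∑ u, ∑ v, max (f u - f v) 0 * (K u v * π u)

noncomputable def mass (π : V → ℝ) (f : V → ℝ) : ℝ :=
  ∑ u, f u * π u

theorem max_sub_zero_eq_add_truncations (a b t : ℝ) :
    max (a - b) 0 = max (min a t - min b t) 0 + max (max (a - t) 0 - max (b - t) 0) 0 := by
  rcases le_total a t with hat | hat <;> rcases le_total b t with hbt | hbt <;>
    rcases le_total a b with hab | hab <;>
    simp [hat, hbt, hab, sub_nonneg.2, sub_nonpos.2] <;> linarith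

variable (K : V → V → ℝ) (π : V → ℝ)

theorem gradNorm_eq_add_truncations (f : V → ℝ) (t : ℝ) :
    gradNorm K π f =
      gradNorm K π (fun u => min (f u) t) + gradNorm K π (fun u => max (f u - t) 0) := by
  simp only [gradNorm, ← sum_add_distrib, ← add_mul, ← max_sub_zero_eq_add_truncations]

theorem mass_eq_add_truncations (f : V → ℝ) (t : ℝ) :
    mass π f = mass π (fun u => min (f u) t) + mass π (fun u => max (f u - t) 0) := by
  simp only [mass, ← sum_add_distrib, ← add_mul]
  refine sum_congr rfl fun u _ => ?_
  rcases le_total (f u) t with h | h <;> simp [h, sub_nonpos.2, sub_nonneg.2]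

variable [DecidableEq V]

theorem gradNorm_ite {c : ℝ} (hc : 0 ≤ c) (Q : Finset V) :
    gradNorm K π (fun u => if u ∈ Q then c else 0) = c * dpart K π Q := by
  have hterm : ∀ u v, max ((if u ∈ Q then c else 0) - if v ∈ Q then c else 0) 0 * (K u v * π u)
      = if u ∈ Q then (if v ∈ Qᶜ then c * (K u v * π u) else 0) else 0 := by
    intro u v
    by_cases hu : u ∈ Q <;> by_cases hv : v ∈ Q <;> simp [hu, hv, hc]
  simp only [gradNorm, dpart, hterm, sum_ite_irrel, sum_ite_mem, univ_inter, sum_const_zero,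
    mul_sum]

theorem mass_ite (c : ℝ) (Q : Finset V) :
    mass π (fun u => if u ∈ Q then c else 0) = c * pim π Q := by
  simp only [mass, pim, ite_mul, zero_mul, sum_ite_mem, univ_inter, mul_sum]

theorem mul_mass_lt_gradNorm {f : V → ℝ} (hf0 : ∀ u, 0 ≤ f u) (hf : f ≠ 0) {r : ℝ}
    (hr : ∀ Q : Finset V, Q.Nonempty → (∀ u ∈ Q, 0 < f u) → r * pim π Q < dpart K π Q) :
    r * mass π f < gradNorm K π f := by
  induction hN : #{u | 0 < f u} using Nat.strong_induction_on generalizing f with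
  | _ N ih =>
  set S : Finset V := {u | 0 < f u}
  have hS : S.Nonempty := by
    obtain ⟨u, hu⟩ := Function.ne_iff.1 hf
    exact ⟨u, mem_filter.2 ⟨mem_univ u, (hf0 u).lt_of_ne' hu⟩⟩
  obtain ⟨u₀, hu₀, hmin⟩ := S.exists_min_image f hS
  set t := f u₀
  have ht : 0 < t := (mem_filter.1 hu₀).2
  set g : V → ℝ := fun u => max (f u - t) 0
  have hbottom : (fun u => min (f u) t) = fun u => if u ∈ S then t else 0 := by
    funext u
    by_cases hu : 0 < f u
    · simp [S, hu, hmin u (mem_filter.2 ⟨mem_univ u, hu⟩)]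
    · simp [S, le_antisymm (not_lt.1 hu) (hf0 u), ht.le]
  have hg0 : ∀ u, 0 ≤ g u := fun u => le_max_right _ _
  have hgf : ∀ u, 0 < g u → t < f u := fun u hu => by simpa [g] using hu
  have hg : r * mass π g ≤ gradNorm K π g := by
    by_cases hg : g = 0
    · simp [hg, mass, gradNorm]
    refine (ih _ ?_ hg0 hg (fun Q hQ hQg => hr Q hQ fun u hu => ht.trans (hgf u (hQg u hu))) rfl).le
    rw [← hN]
    refine card_lt_card ((ssubset_iff_of_subset fun u hu => ?_).2 ⟨u₀, hu₀, fun hu => ?_⟩)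
    · exact mem_filter.2 ⟨mem_univ u, ht.trans (hgf u (mem_filter.1 hu).2)⟩
    · exact lt_irrefl t (hgf u₀ (mem_filter.1 hu).2)
  have hSr : t * (r * pim π S) < t * dpart K π S :=
    mul_lt_mul_of_pos_left (hr S hS fun u hu => (mem_filter.1 hu).2) ht
  rw [mass_eq_add_truncations π f t, gradNorm_eq_add_truncations K π f t, hbottom, mass_ite,
    gradNorm_ite K π ht.le]
  linarith

theorem exists_dpart_le_mul_pim {f : V → ℝ} (hf0 : ∀ u, 0 ≤ f u) (hf : f ≠ 0) {r : ℝ}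
    (hr : gradNorm K π f ≤ r * mass π f) :
    ∃ Q : Finset V, Q.Nonempty ∧ (∀ u ∈ Q, 0 < f u) ∧ dpart K π Q ≤ r * pim π Q := by
  by_contra! h
  exact (mul_mass_lt_gradNorm K π hf0 hf h).not_ge hr

end Coarea

theorem pim_pos {V : Type*} {π : V → ℝ} (hπ : ∀ u, 0 < π u) {Q : Finset V} (hQ : Q.Nonempty) :
    0 < pim π Q :=
  sum_pos (fun u _ => hπ u) hQ

theorem disjoint_of_sum_mul_mul_eq_zero {V : Type*} [Fintype V] {π : V → ℝ}
    (hπ : ∀ u, 0 < π u) {f g : V → ℝ}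
    (hf : ∀ u, 0 ≤ f u) (hg : ∀ u, 0 ≤ g u) (h : ∑ u, f u * g u * π u = 0)
    {P Q : Finset V} (hP : ∀ u ∈ P, 0 < f u) (hQ : ∀ u ∈ Q, 0 < g u) : Disjoint P Q := by
  rw [sum_eq_zero_iff_of_nonneg fun u _ => mul_nonneg (mul_nonneg (hf u) (hg u)) (hπ u).le] at h
  refine disjoint_left.2 fun u huP huQ => ?_
  exact (mul_pos (mul_pos (hP u huP) (hQ u huQ)) (hπ u)).ne' (h u (mem_univ u))

section Constants

variable {V : Type*} [Fintype V] [DecidableEq V]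

-- The sets whose infima are, definitionally, `iotaD K π n` and `gammaN K π n`.
def isoperimetricValues (K : V → V → ℝ) (π : V → ℝ) (n : ℕ) : Set ℝ :=
  {x | ∃ Q : Fin n → Finset V, (∀ i, (Q i).Nonempty) ∧ Pairwise (Function.onFun Disjoint Q) ∧
    x = (∑ i, dpart K π (Q i) / pim π (Q i)) / n}

def functionalValues (K : V → V → ℝ) (π : V → ℝ) (n : ℕ) : Set ℝ :=
  {x | ∃ f : Fin n → V → ℝ, (∀ i, f i ≠ 0) ∧ (∀ i u, 0 ≤ f i u) ∧ (∀ i, mass π (f i) = 1) ∧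
    (Pairwise fun i j => ∑ u, f i u * f j u * π u = 0) ∧ x = (∑ i, gradNorm K π (f i)) / n}

variable {K : V → V → ℝ} {π : V → ℝ} {n : ℕ}

theorem isoperimetricValues_subset_functionalValues (hπ : ∀ u, 0 < π u) :
    isoperimetricValues K π n ⊆ functionalValues K π n := by
  rintro x ⟨Q, hQ, hdisj, rfl⟩
  have hpim : ∀ i, 0 < pim π (Q i) := fun i => pim_pos hπ (hQ i)
  refine ⟨fun i u => if u ∈ Q i then (pim π (Q i))⁻¹ else 0, fun i hi => ?_, fun i u => ?_,
    fun i => ?_, fun i j hij => ?_, ?_⟩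
  · obtain ⟨u, hu⟩ := hQ i
    simpa [hu, (hpim i).ne'] using congrFun hi u
  · dsimp only
    split_ifs <;> simp [(hpim i).le]
  · rw [mass_ite, inv_mul_cancel₀ (hpim i).ne']
  · refine sum_eq_zero fun u _ => ?_
    by_cases hu : u ∈ Q i
    · simp [hu, disjoint_left.1 (hdisj hij) hu]
    · simp [hu]
  · simp only [gradNorm_ite K π (inv_nonneg.2 (hpim _).le), inv_mul_eq_div]

theorem exists_isoperimetricValues_le (hπ : ∀ u, 0 < π u) :
    ∀ x ∈ functionalValues K π n, ∃ y ∈ isoperimetricValues K π n, y ≤ x := by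
  rintro x ⟨f, hf, hf0, hf1, horth, rfl⟩
  have hQ (i : Fin n) : ∃ Q : Finset V, Q.Nonempty ∧ (∀ u ∈ Q, 0 < f i u) ∧
      dpart K π Q ≤ gradNorm K π (f i) * pim π Q :=
    exists_dpart_le_mul_pim K π (hf0 i) (hf i) (by rw [hf1 i, mul_one])
  choose Q hQ hQf hQle using hQ
  refine ⟨_, ⟨Q, hQ, fun i j hij =>
    disjoint_of_sum_mul_mul_eq_zero hπ (hf0 i) (hf0 j) (horth hij) (hQf i) (hQf j), rfl⟩, ?_⟩
  gcongr with i
  exact (div_le_iff₀ (pim_pos hπ (hQ i))).2 (hQle i)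

end Constants

theorem federer_fleming_general {V : Type*} [Fintype V] [DecidableEq V]
    (K : V → V → ℝ) (π : V → ℝ)
    (hπ : ∀ u, 0 < π u)
    (n : ℕ) :
    iotaD K π n = gammaN K π n :=
  csInf_eq_csInf_of_forall_exists_le
    (fun x hx => ⟨x, isoperimetricValues_subset_functionalValues hπ hx, le_rfl⟩)
    (exists_isoperimetricValues_le hπ)

theorem federer_fleming {V : Type*} [Fintype V] [DecidableEq V]
    (K : V → V → ℝ) (π : V → ℝ)
    (hK0 : ∀ u v, 0 ≤ K u v) (hK1 : ∀ u, ∑ v, K u v = 1)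
    (hπ : ∀ u, 0 < π u) (hπ1 : ∑ u, π u = 1)
    (hstat : ∀ v, ∑ u, π u * K u v = π v)
    (n : ℕ) (hn : 0 < n) (hcard : n ≤ Fintype.card V) :
    iotaD K π n = gammaN K π n :=
  federer_fleming_general K π hπ n
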